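/- arXiv:2309.09013 — 2 statements merged into one kernel-verified Lean document; each statement's English description precedes it below -/
import Mathlib

section
/- Let π : [N] → [m] and for u ∈ ℝ^N define the upper-bound sketch ū ∈ ℝ^m by ū_k = max({u_i : i ∈ nz(u), π(i) = k} ∪ {0}) and the lower-bound sketch u̲_k = min({u_i : i ∈ nz(u), π(i) = k} ∪ {0}). For q ∈ ℝ^N define q̄_k = Σ_{i ∈ nz(q), π(i)=k, q_i>0} q_i and q̲_k = Σ_{i ∈ nz(q), π(i)=k, q_i<0} q_i. Then ⟨q̄, ū⟩ + ⟨q̲, u̲⟩ = Σ_{i: q_i>0} q_i ū_{π(i)} + Σ_{i: q_i<0} q_i u̲_{π(i)} ≥ ⟨q, u⟩. -/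
open Finset

/-- Weak Sinnamon upper-bound sketch: `ū_k = max({u_i : u_i ≠ 0, π(i) = k} ∪ {0})`. -/
noncomputable def ubSketch {N m : ℕ} (π : Fin N → Fin m) (u : Fin N → ℝ) (k : Fin m) : ℝ :=
  (insert (0 : ℝ) ((Finset.univ.filter fun i => u i ≠ 0 ∧ π i = k).image u)).max'
    (Finset.insert_nonempty _ _)

/-- Weak Sinnamon lower-bound sketch: `u̲_k = min({u_i : u_i ≠ 0, π(i) = k} ∪ {0})`. -/
noncomputable def lbSketch {N m : ℕ} (π : Fin N → Fin m) (u : Fin N → ℝ) (k : Fin m) : ℝ :=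
  (insert (0 : ℝ) ((Finset.univ.filter fun i => u i ≠ 0 ∧ π i = k).image u)).min'
    (Finset.insert_nonempty _ _)

/-- Weak Sinnamon positive query sketch: `q̄_k = Σ_{i ∈ nz(q), π(i)=k, q_i>0} q_i`. -/
noncomputable def posQuerySketch {N m : ℕ} (π : Fin N → Fin m) (q : Fin N → ℝ) (k : Fin m) : ℝ :=
  ∑ i ∈ Finset.univ.filter fun i => π i = k ∧ 0 < q i, q i

/-- Weak Sinnamon negative query sketch: `q̲_k = Σ_{i ∈ nz(q), π(i)=k, q_i<0} q_i`. -/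
noncomputable def negQuerySketch {N m : ℕ} (π : Fin N → Fin m) (q : Fin N → ℝ) (k : Fin m) : ℝ :=
  ∑ i ∈ Finset.univ.filter fun i => π i = k ∧ q i < 0, q i

lemma le_ub {N m : ℕ} (π : Fin N → Fin m) (u : Fin N → ℝ) (i : Fin N) :
    u i ≤ ubSketch π u (π i) := by
  by_cases h : u i = 0
  · rw [h]; exact Finset.le_max' _ _ (mem_insert_self _ _)
  · exact Finset.le_max' _ _ (mem_insert_of_mem (mem_image_of_mem u (by simp [h])))

lemma lb_le {N m : ℕ} (π : Fin N → Fin m) (u : Fin N → ℝ) (i : Fin N) :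
    lbSketch π u (π i) ≤ u i := by
  by_cases h : u i = 0
  · rw [h]; exact Finset.min'_le _ _ (mem_insert_self _ _)
  · exact Finset.min'_le _ _ (mem_insert_of_mem (mem_image_of_mem u (by simp [h])))

/-- The inner product of the Weak Sinnamon query sketch and document sketch
equals `Σ_{i: q_i>0} q_i ū_{π(i)} + Σ_{i: q_i<0} q_i u̲_{π(i)}`, and upper-bounds the true
inner product `⟨q, u⟩`. -/
theorem weak_sinnamon_sketch_inner_product
    {N m : ℕ} (π : Fin N → Fin m) (u q : Fin N → ℝ) :
    (∑ k : Fin m, posQuerySketch π q k * ubSketch π u k)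
        + (∑ k : Fin m, negQuerySketch π q k * lbSketch π u k)
      = (∑ i ∈ Finset.univ.filter fun i => 0 < q i, q i * ubSketch π u (π i))
        + (∑ i ∈ Finset.univ.filter fun i => q i < 0, q i * lbSketch π u (π i))
    ∧ ∑ i : Fin N, q i * u i
        ≤ (∑ i ∈ Finset.univ.filter fun i => 0 < q i, q i * ubSketch π u (π i))
          + (∑ i ∈ Finset.univ.filter fun i => q i < 0, q i * lbSketch π u (π i)) := by
  have hpos : ∑ k : Fin m, posQuerySketch π q k * ubSketch π u k
      = ∑ i ∈ Finset.univ.filter fun i => 0 < q i, q i * ubSketch π u (π i) := by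
    simp only [posQuerySketch, Finset.sum_mul]
    rw [← Finset.sum_fiberwise (Finset.univ.filter fun i => 0 < q i) π
      (fun i => q i * ubSketch π u (π i))]
    refine Finset.sum_congr rfl fun k _ => ?_
    rw [Finset.filter_filter]
    refine Finset.sum_congr (by apply Finset.filter_congr; intro i _; tauto) fun i hi => ?_
    simp only [mem_filter] at hi
    rw [hi.2.2]
  have hneg : ∑ k : Fin m, negQuerySketch π q k * lbSketch π u k
      = ∑ i ∈ Finset.univ.filter fun i => q i < 0, q i * lbSketch π u (π i) := by
    simp only [negQuerySketch, Finset.sum_mul]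
    rw [← Finset.sum_fiberwise (Finset.univ.filter fun i => q i < 0) π
      (fun i => q i * lbSketch π u (π i))]
    refine Finset.sum_congr rfl fun k _ => ?_
    rw [Finset.filter_filter]
    refine Finset.sum_congr (by apply Finset.filter_congr; intro i _; tauto) fun i hi => ?_
    simp only [mem_filter] at hi
    rw [hi.2.2]
  refine ⟨by rw [hpos, hneg], ?_⟩
  have hsplit : ∑ i : Fin N, q i * u i
      = (∑ i ∈ Finset.univ.filter fun i => 0 < q i, q i * u i)
        + (∑ i ∈ Finset.univ.filter fun i => q i < 0, q i * u i) := by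
    rw [← Finset.sum_filter_add_sum_filter_not Finset.univ (fun i => 0 < q i)]
    congr 1
    rw [← Finset.sum_filter_add_sum_filter_not (Finset.univ.filter fun i => ¬ 0 < q i)
      (fun i => q i < 0), Finset.filter_filter]
    have : (Finset.univ.filter fun i => ¬ 0 < q i ∧ q i < 0)
        = Finset.univ.filter fun i => q i < 0 := by
      apply Finset.filter_congr; intro i _; constructor <;> intro h
      · exact h.2
      · exact ⟨by linarith, h⟩
    rw [this]
    have hz : ∑ i ∈ (Finset.univ.filter fun i => ¬ 0 < q i).filter (fun i => ¬ q i < 0),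
        q i * u i = 0 := by
      apply Finset.sum_eq_zero; intro i hi
      simp only [mem_filter, not_lt] at hi
      have : q i = 0 := le_antisymm hi.1.2 hi.2
      simp [this]
    rw [hz, add_zero]
  rw [hsplit]
  refine add_le_add (Finset.sum_le_sum fun i hi => ?_) (Finset.sum_le_sum fun i hi => ?_)
  · simp only [mem_filter] at hi
    exact mul_le_mul_of_nonneg_left (le_ub π u i) hi.2.le
  · simp only [mem_filter] at hi
    exact mul_le_mul_of_nonpos_left (lb_le π u i) hi.2.le
end

section
/- Suppose a coordinate i of a random sparse vector X is inactive (X_i = 0), and all other coordinates are independently active with probabilities p_j, with active values drawn i.i.d. from a distribution with CDF Φ. If each active coordinate is hashed uniformly at random into one of m buckets independently, then the probability that the Weak Sinnamon upper-bound sketch value at bucket π(i) is at most δ ≥ 0 equals Π_{j≠i} (1 − p_j(1 − Φ(δ))/m). -/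
open MeasureTheory ProbabilityTheory Finset
open scoped ENNReal NNReal

/-- Coordinate `i` is inactive (`X_i = 0`); every other coordinate `j` is
independently active with probability `p_j` (indicator `B_j`), active values `V_j` are
i.i.d. with CDF `Φ`, and each coordinate is hashed by `H` uniformly and independently into
one of `m` buckets. Then for `δ ≥ 0`, the probability that the Weak Sinnamon upper-bound
sketch value at bucket `b = π(i)` is at most `δ` equals `Π_{j≠i} (1 − p_j(1 − Φ(δ))/m)`. -/
theorem weak_sinnamon_inactive_coordinate_error
    {Ω : Type*} [MeasurableSpace Ω] (μ : Measure Ω) [IsProbabilityMeasure μ]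
    (N m : ℕ) (hm : 0 < m) (i : Fin N) (b : Fin m)
    (p : Fin N → ℝ) (Φ : ℝ → ℝ) (δ : ℝ) (hδ : 0 ≤ δ)
    (B V : Fin N → Ω → ℝ) (H : Fin N → Ω → Fin m)
    (hp : ∀ j, 0 ≤ p j ∧ p j ≤ 1)
    (hΦ : ∀ t, 0 ≤ Φ t ∧ Φ t ≤ 1)
    (hBmeas : ∀ j, Measurable (B j))
    (hVmeas : ∀ j, Measurable (V j))
    (hHmeas : ∀ j, Measurable (H j))
    (hindep : iIndepFun
      (β := Sum.elim (fun _ : Fin N ⊕ Fin N => ℝ) (fun _ : Fin N => Fin m))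
      (m := fun s : (Fin N ⊕ Fin N) ⊕ Fin N =>
        match s with
        | .inl _ => (inferInstance : MeasurableSpace ℝ)
        | .inr _ => (inferInstance : MeasurableSpace (Fin m)))
      (fun s =>
        match s with
        | .inl (.inl j) => B j
        | .inl (.inr j) => V j
        | .inr j => H j) μ)
    (hBdist : ∀ j, μ.map (B j) =
      ENNReal.ofReal (1 - p j) • Measure.dirac (0 : ℝ) +
      ENNReal.ofReal (p j) • Measure.dirac (1 : ℝ))
    (hVcdf : ∀ j t, (μ {ω | V j ω ≤ t}).toReal = Φ t)
    (hHuniform : ∀ j c, μ {ω | H j ω = c} = (m : ℝ≥0∞)⁻¹)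
    (hBi : ∀ ω, B i ω = 0) :
    (μ {ω | ((insert (0 : ℝ)
        (((Finset.univ.filter fun j => j ≠ i ∧ B j ω = 1 ∧ H j ω = b)).image
          fun j => V j ω)).max' (Finset.insert_nonempty _ _)) ≤ δ}).toReal
      = ∏ j ∈ Finset.univ.erase i, (1 - p j * (1 - Φ δ) / m) := by
  classical
  set Cs : Fin N → Set Ω := fun j =>
    (B j ⁻¹' {1}) ∩ (V j ⁻¹' Set.Ioi δ) ∩ (H j ⁻¹' {b}) with hCs
  set g : (Fin N ⊕ Fin N) ⊕ Fin N → Set Ω := fun s =>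
    match s with
    | .inl (.inl j) => B j ⁻¹' {1}
    | .inl (.inr j) => V j ⁻¹' Set.Ioi δ
    | .inr j => H j ⁻¹' {b} with hg
  set t : Fin N → Finset ((Fin N ⊕ Fin N) ⊕ Fin N) :=
    fun j => {.inl (.inl j), .inl (.inr j), .inr j} with ht
  -- key independence computation
  have key : ∀ s : Finset (Fin N), μ (⋂ j ∈ s, Cs j) =
      ∏ j ∈ s, (μ (B j ⁻¹' {1}) * μ (V j ⁻¹' Set.Ioi δ) * μ (H j ⁻¹' {b})) := by
    intro s
    have hdisj : (↑s : Set (Fin N)).PairwiseDisjoint t := by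
      intro a _ c _ hac
      simp only [ht, Finset.disjoint_left, Finset.mem_insert, Finset.mem_singleton]
      rintro x (rfl | rfl | rfl) <;> simp_all
    have hinter : ⋂ j ∈ s, Cs j = ⋂ k ∈ s.biUnion t, g k := by
      rw [Finset.set_biInter_biUnion]
      refine Set.iInter₂_congr fun j hj => ?_
      simp only [ht]
      rw [Finset.set_biInter_insert, Finset.set_biInter_insert,
        Finset.set_biInter_singleton]
      simp only [hCs, hg, Set.inter_assoc]
    rw [hinter]
    refine Eq.trans (hindep.meas_biInter ?_) ?_
    · rintro ((j | j) | j) _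
      · exact ⟨_, measurableSet_singleton (1 : ℝ), rfl⟩
      · exact ⟨_, (measurableSet_Ioi : MeasurableSet (Set.Ioi δ)), rfl⟩
      · exact ⟨_, measurableSet_singleton b, rfl⟩
    rw [Finset.prod_biUnion hdisj]
    refine Finset.prod_congr rfl fun j hj => ?_
    simp only [ht]
    rw [Finset.prod_insert (by simp), Finset.prod_insert (by simp),
      Finset.prod_singleton, mul_assoc]
  have hCmeas : ∀ j, MeasurableSet (Cs j) := fun j =>
    (((hBmeas j) (measurableSet_singleton 1)).inter
      ((hVmeas j) measurableSet_Ioi)).inter ((hHmeas j) (measurableSet_singleton b))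
  have hsingle : ∀ j, μ (Cs j) =
      μ (B j ⁻¹' {1}) * μ (V j ⁻¹' Set.Ioi δ) * μ (H j ⁻¹' {b}) := by
    intro j
    simpa using key {j}
  have hiis : iIndepSet Cs μ := by
    rw [iIndepSet_iff_meas_biInter hCmeas]
    intro s
    rw [key s]
    exact Finset.prod_congr rfl fun j _ => (hsingle j).symm
  have hiind : iIndep (fun j => MeasurableSpace.generateFrom {Cs j}) μ :=
    (iIndepSet_iff_iIndep _ _).1 hiis
  -- rewrite the event
  have hE : {ω | ((insert (0 : ℝ)
        (((Finset.univ.filter fun j => j ≠ i ∧ B j ω = 1 ∧ H j ω = b)).image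
          fun j => V j ω)).max' (Finset.insert_nonempty _ _)) ≤ δ}
      = ⋂ j ∈ Finset.univ.erase i, (Cs j)ᶜ := by
    ext ω
    simp only [Set.mem_setOf_eq, Finset.max'_le_iff, Finset.mem_insert, Finset.mem_image,
      Finset.mem_filter, Finset.mem_univ, true_and, Set.mem_iInter, Finset.mem_erase,
      Set.mem_compl_iff, hCs, Set.mem_inter_iff, Set.mem_preimage, Set.mem_singleton_iff,
      Set.mem_Ioi]
    constructor
    · rintro h j ⟨hji, -⟩ ⟨⟨hB1, hV⟩, hH⟩
      exact absurd (h _ (Or.inr ⟨j, ⟨hji, hB1, hH⟩, rfl⟩)) (not_le.mpr hV)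
    · rintro h x (rfl | ⟨j, ⟨hji, hB1, hH⟩, rfl⟩)
      · exact hδ
      · by_contra hlt
        exact h j ⟨hji, trivial⟩ ⟨⟨hB1, not_le.mp hlt⟩, hH⟩
  -- individual measures
  have hB1 : ∀ j, μ (B j ⁻¹' {1}) = ENNReal.ofReal (p j) := by
    intro j
    rw [← Measure.map_apply (hBmeas j) (measurableSet_singleton 1), hBdist j]
    simp [Measure.dirac_apply]
  have hV1 : ∀ j, μ (V j ⁻¹' Set.Ioi δ) = ENNReal.ofReal (1 - Φ δ) := by
    intro j
    have hIic : μ (V j ⁻¹' Set.Iic δ) = ENNReal.ofReal (Φ δ) := by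
      have h1 := hVcdf j δ
      have h2 : μ (V j ⁻¹' Set.Iic δ) = μ {ω | V j ω ≤ δ} := rfl
      rw [h2, ← h1, ENNReal.ofReal_toReal (measure_ne_top μ _)]
    rw [← Set.compl_Iic, Set.preimage_compl,
      prob_compl_eq_one_sub ((hVmeas j) measurableSet_Iic), hIic,
      ← ENNReal.ofReal_one, ← ENNReal.ofReal_sub _ (hΦ δ).1]
  have hH1 : ∀ j, μ (H j ⁻¹' {b}) = (m : ℝ≥0∞)⁻¹ := by
    intro j
    have : H j ⁻¹' {b} = {ω | H j ω = b} := by ext ω; simp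
    rw [this, hHuniform j b]
  -- value of μ (Cs j)
  have hyge : ∀ j : Fin N, 0 ≤ p j * (1 - Φ δ) / m := fun j =>
    div_nonneg (mul_nonneg (hp j).1 (sub_nonneg.mpr (hΦ δ).2)) (Nat.cast_nonneg m)
  have hyle : ∀ j : Fin N, p j * (1 - Φ δ) / m ≤ 1 := by
    intro j
    rw [div_le_one (by exact_mod_cast hm)]
    calc p j * (1 - Φ δ) ≤ 1 * 1 :=
          mul_le_mul (hp j).2 (by linarith [(hΦ δ).1]) (by linarith [(hΦ δ).2]) zero_le_one
      _ = 1 := one_mul 1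
      _ ≤ (m : ℝ) := by exact_mod_cast hm
  have hCval : ∀ j, μ (Cs j) = ENNReal.ofReal (p j * (1 - Φ δ) / m) := by
    intro j
    rw [hsingle j, hB1 j, hV1 j, hH1 j, div_eq_mul_inv,
      ENNReal.ofReal_mul (mul_nonneg (hp j).1 (sub_nonneg.mpr (hΦ δ).2)),
      ENNReal.ofReal_mul (hp j).1, ENNReal.ofReal_inv_of_pos (by exact_mod_cast hm),
      ENNReal.ofReal_natCast]
  have hCcompl : ∀ j, μ ((Cs j)ᶜ) = ENNReal.ofReal (1 - p j * (1 - Φ δ) / m) := by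
    intro j
    rw [prob_compl_eq_one_sub (hCmeas j), hCval j, ← ENNReal.ofReal_one,
      ← ENNReal.ofReal_sub _ (hyge j)]
  -- put it together
  have hmain : μ (⋂ j ∈ Finset.univ.erase i, (Cs j)ᶜ)
      = ∏ j ∈ Finset.univ.erase i, μ ((Cs j)ᶜ) :=
    hiind.meas_biInter fun j _ =>
      (MeasurableSpace.measurableSet_generateFrom (Set.mem_singleton _)).compl
  rw [hE, hmain, ENNReal.toReal_prod]
  refine Finset.prod_congr rfl fun j _ => ?_
  rw [hCcompl j, ENNReal.toReal_ofReal (by linarith [hyle j])]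
end
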